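/- arXiv:2209.10182 — 10 statements merged into one kernel-verified Lean document; each statement's English description precedes it below -/
import Mathlib

section
/- A two-player game (u1,u2) is strategically equivalent to a potential game if and only if for every cycle of comparable profiles, the signed sum of payoff differences along the cycle is zero; equivalently, all paths between the same two profiles have equal path-weight, where the path-weight of a path x1,...,xn is the sum over i of u_{p_i}(x_{i+1}) - u_{p_i}(x_i) with p_i the player in which x_i and x_{i+1} differ. -/
/-!
Along a chain of comparable profiles the path-weight of a game with potential `φ` telescopes
to `φ y - φ x`, and strategic equivalence does not change the weights of single steps.
Conversely, path independence applied to the two sides of a rectangle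
`(a, b) → (a', b) → (a', b')` and `(a, b) → (a, b') → (a', b')` is exactly what makes
`φ (a, b) = u1 (a, b₀) + u2 (a, b) - u2 (a, b₀)` a potential of the game itself.
-/

/-- Profiles `p q` are 1-comparable: they differ only in player 1's strategy. -/
def Comp1 {S1 S2 : Type} (p q : S1 × S2) : Prop := p.1 ≠ q.1 ∧ p.2 = q.2

/-- Profiles `p q` are 2-comparable: they differ only in player 2's strategy. -/
def Comp2 {S1 S2 : Type} (p q : S1 × S2) : Prop := p.1 = q.1 ∧ p.2 ≠ q.2

/-- Profiles are comparable if they differ in the strategy of exactly one player. -/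
def Comparable {S1 S2 : Type} (p q : S1 × S2) : Prop := Comp1 p q ∨ Comp2 p q

/-- Arc of the response graph (weak arcs: `≥` for the deviating player). -/
def Arc {S1 S2 : Type} (u1 u2 : S1 × S2 → ℝ) (p q : S1 × S2) : Prop :=
  (Comp1 p q ∧ u1 p ≤ u1 q) ∨ (Comp2 p q ∧ u2 p ≤ u2 q)

/-- Strict arc of the response graph. -/
def SArc {S1 S2 : Type} (u1 u2 : S1 × S2 → ℝ) (p q : S1 × S2) : Prop :=
  (Comp1 p q ∧ u1 p < u1 q) ∨ (Comp2 p q ∧ u2 p < u2 q)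

/-- `φ` is a potential function for the game `(v1, v2)`. -/
def IsPotential {S1 S2 : Type} (v1 v2 φ : S1 × S2 → ℝ) : Prop :=
  (∀ p q, Comp1 p q → φ p - φ q = v1 p - v1 q) ∧
  (∀ p q, Comp2 p q → φ p - φ q = v2 p - v2 q)

/-- Strategic equivalence: equal payoff differences on comparable profiles. -/
def StratEquiv {S1 S2 : Type} (u1 u2 v1 v2 : S1 × S2 → ℝ) : Prop :=
  (∀ p q, Comp1 p q → u1 p - u1 q = v1 p - v1 q) ∧
  (∀ p q, Comp2 p q → u2 p - u2 q = v2 p - v2 q)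

/-- Preference equivalence: isomorphism of response graphs. -/
def PrefEquiv {S1 S2 T1 T2 : Type} (u1 u2 : S1 × S2 → ℝ) (v1 v2 : T1 × T2 → ℝ) : Prop :=
  ∃ e : (S1 × S2) ≃ (T1 × T2), ∀ p q, Arc u1 u2 p q ↔ Arc v1 v2 (e p) (e q)

/-- The game is preference-equivalent to a zero-sum game. -/
def PrefZeroSum {S1 S2 : Type} (u1 u2 : S1 × S2 → ℝ) : Prop :=
  ∃ (T1 T2 : Type) (v : T1 × T2 → ℝ), PrefEquiv u1 u2 v (fun p => -v p)

/-- The game is preference-equivalent to a potential game. -/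
def PrefPotential {S1 S2 : Type} (u1 u2 : S1 × S2 → ℝ) : Prop :=
  ∃ (T1 T2 : Type) (v1 v2 φ : T1 × T2 → ℝ), IsPotential v1 v2 φ ∧ PrefEquiv u1 u2 v1 v2

/-- Reachability in the response graph. -/
def Reach {S1 S2 : Type} (u1 u2 : S1 × S2 → ℝ) : S1 × S2 → S1 × S2 → Prop :=
  Relation.ReflTransGen (Arc u1 u2)

/-- `p` lies in a sink strongly connected component of the response graph. -/
def InSink {S1 S2 : Type} (u1 u2 : S1 × S2 → ℝ) (p : S1 × S2) : Prop :=
  ∀ q, Reach u1 u2 p q → Reach u1 u2 q p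

/-- Genericity: no player is ever indifferent between comparable profiles. -/
def Generic {S1 S2 : Type} (u1 u2 : S1 × S2 → ℝ) : Prop :=
  (∀ p q, Comp1 p q → u1 p ≠ u1 q) ∧ (∀ p q, Comp2 p q → u2 p ≠ u2 q)

/-- Pure Nash equilibrium. -/
def IsPNE {S1 S2 : Type} (u1 u2 : S1 × S2 → ℝ) (p : S1 × S2) : Prop :=
  (∀ t, u1 (t, p.2) ≤ u1 p) ∧ (∀ t, u2 (p.1, t) ≤ u2 p)

/-- The path-weight of a path of profiles. -/
noncomputable def pathWeight {S1 S2 : Type} [DecidableEq S2] (u1 u2 : S1 × S2 → ℝ) :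
    List (S1 × S2) → ℝ
  | [] => 0
  | [_] => 0
  | p :: q :: l =>
      (if p.2 = q.2 then u1 q - u1 p else u2 q - u2 p) + pathWeight u1 u2 (q :: l)

variable {S1 S2 : Type}

section StepWeight

variable [DecidableEq S2] (u1 u2 : S1 × S2 → ℝ)

noncomputable def stepWeight (p q : S1 × S2) : ℝ :=
  if p.2 = q.2 then u1 q - u1 p else u2 q - u2 p

theorem pathWeight_cons_cons (p q : S1 × S2) (l : List (S1 × S2)) :
    pathWeight u1 u2 (p :: q :: l) = stepWeight u1 u2 p q + pathWeight u1 u2 (q :: l) :=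
  rfl

def PathIndependent : Prop :=
  ∀ (l1 l2 : List (S1 × S2)) (x y : S1 × S2),
    l1.IsChain Comparable → l2.IsChain Comparable →
    l1.head? = some x → l2.head? = some x →
    l1.getLast? = some y → l2.getLast? = some y →
    pathWeight u1 u2 l1 = pathWeight u1 u2 l2

end StepWeight

namespace IsPotential

variable {u1 u2 v1 v2 φ : S1 × S2 → ℝ}

theorem of_stratEquiv (he : StratEquiv u1 u2 v1 v2) (hφ : IsPotential v1 v2 φ) :
    IsPotential u1 u2 φ :=
  ⟨fun p q h => (hφ.1 p q h).trans (he.1 p q h).symm,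
    fun p q h => (hφ.2 p q h).trans (he.2 p q h).symm⟩

variable [DecidableEq S2]

theorem stepWeight_eq (hφ : IsPotential u1 u2 φ) {p q : S1 × S2} (hpq : Comparable p q) :
    stepWeight u1 u2 p q = φ q - φ p := by
  rcases hpq with ⟨hne, h2⟩ | ⟨h1, hne⟩
  · rw [stepWeight, if_pos h2, hφ.1 q p ⟨hne.symm, h2.symm⟩]
  · rw [stepWeight, if_neg hne, hφ.2 q p ⟨h1.symm, hne.symm⟩]

theorem pathWeight_eq (hφ : IsPotential u1 u2 φ) :
    ∀ {l : List (S1 × S2)} {x y : S1 × S2}, l.IsChain Comparable →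
      l.head? = some x → l.getLast? = some y → pathWeight u1 u2 l = φ y - φ x
  | [], _, _, _, hx, _ => by simp at hx
  | [p], x, y, _, hx, hy => by
    simp only [List.head?_cons, List.getLast?_singleton, Option.some.injEq] at hx hy
    subst hx hy
    simp [pathWeight]
  | p :: q :: l, x, y, hc, hx, hy => by
    obtain ⟨hpq, hc⟩ := List.isChain_cons_cons.mp hc
    cases Option.some_injective _ hx
    rw [List.getLast?_cons_cons] at hy
    rw [pathWeight_cons_cons, hφ.stepWeight_eq hpq, hφ.pathWeight_eq hc rfl hy]
    ring

theorem pathIndependent (hφ : IsPotential u1 u2 φ) : PathIndependent u1 u2 :=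
  fun _ _ _ _ hc1 hc2 hx1 hx2 hy1 hy2 => by
    rw [hφ.pathWeight_eq hc1 hx1 hy1, hφ.pathWeight_eq hc2 hx2 hy2]

end IsPotential

section Rectangle

variable {u1 u2 : S1 × S2 → ℝ}

theorem PathIndependent.rectangle [DecidableEq S2] (H : PathIndependent u1 u2)
    (a a' : S1) (b b' : S2) :
    u1 (a', b) - u1 (a, b) + (u2 (a', b') - u2 (a', b)) =
      u2 (a, b') - u2 (a, b) + (u1 (a', b') - u1 (a, b')) := by
  rcases eq_or_ne a a' with rfl | ha
  · ring
  rcases eq_or_ne b b' with rfl | hb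
  · ring
  have := H [(a, b), (a', b), (a', b')] [(a, b), (a, b'), (a', b')] (a, b) (a', b')
    (by simp [Comparable, Comp1, Comp2, ha, hb]) (by simp [Comparable, Comp1, Comp2, ha, hb])
    rfl rfl rfl rfl
  simpa [pathWeight, hb] using this

theorem isPotential_of_rectangle (b₀ : S2)
    (h : ∀ (a a' : S1) (b b' : S2), u1 (a', b) - u1 (a, b) + (u2 (a', b') - u2 (a', b)) =
      u2 (a, b') - u2 (a, b) + (u1 (a', b') - u1 (a, b'))) :
    IsPotential u1 u2 (fun p => u1 (p.1, b₀) + u2 p - u2 (p.1, b₀)) := by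
  constructor
  · rintro ⟨a, b⟩ ⟨a', b'⟩ ⟨-, rfl : b = b'⟩
    linarith [h a' a b₀ b]
  · rintro ⟨a, b⟩ ⟨a', b'⟩ ⟨rfl : a = a', -⟩
    ring

end Rectangle

/-- a two-player game is strategically equivalent to a potential game
iff all paths between the same two profiles have equal path-weight. -/
theorem strat_potential_iff_path_independent {S1 S2 : Type} [DecidableEq S2]
    (u1 u2 : S1 × S2 → ℝ) :
    (∃ v1 v2 φ : S1 × S2 → ℝ, StratEquiv u1 u2 v1 v2 ∧ IsPotential v1 v2 φ) ↔
    (∀ (l1 l2 : List (S1 × S2)) (x y : S1 × S2),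
      l1.Chain' Comparable → l2.Chain' Comparable →
      l1.head? = some x → l2.head? = some x →
      l1.getLast? = some y → l2.getLast? = some y →
      pathWeight u1 u2 l1 = pathWeight u1 u2 l2) := by
  refine ⟨fun ⟨v1, v2, φ, he, hφ⟩ => (hφ.of_stratEquiv he).pathIndependent, fun H => ?_⟩
  obtain ⟨φ, hφ⟩ : ∃ φ, IsPotential u1 u2 φ := by
    rcases isEmpty_or_nonempty S2 with _ | ⟨⟨b₀⟩⟩
    · exact ⟨0, fun p => isEmptyElim p.2, fun p => isEmptyElim p.2⟩
    · exact ⟨_, isPotential_of_rectangle b₀ (PathIndependent.rectangle H)⟩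
  exact ⟨u1, u2, φ, ⟨fun _ _ _ => rfl, fun _ _ _ => rfl⟩, hφ⟩
end

section
/- A two-player game (u1,u2) is strategically equivalent to a zero-sum game if and only if its reflection (u1,-u2) is strategically equivalent to a potential game. -/
/-- a game is strategically equivalent to a zero-sum game iff its
reflection is strategically equivalent to a potential game. -/
theorem strat_zero_sum_iff_reflection_strat_potential {S1 S2 : Type}
    (u1 u2 : S1 × S2 → ℝ) :
    (∃ v1 v2 : S1 × S2 → ℝ, StratEquiv u1 u2 v1 v2 ∧ ∀ p, v1 p + v2 p = 0) ↔
    (∃ w1 w2 φ : S1 × S2 → ℝ, StratEquiv u1 (fun p => -u2 p) w1 w2 ∧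
      IsPotential w1 w2 φ) := by
  constructor
  · rintro ⟨v1, v2, ⟨h1, h2⟩, hz⟩
    refine ⟨v1, v1, v1, ⟨h1, ?_⟩, fun p q _ => rfl, fun p q _ => rfl⟩
    intro p q hc
    have hp := hz p
    have hq := hz q
    have := h2 p q hc
    simp only at *
    linarith
  · rintro ⟨w1, w2, φ, ⟨h1, h2⟩, hp1, hp2⟩
    refine ⟨φ, fun p => -φ p, ⟨?_, ?_⟩, fun p => by ring⟩
    · intro p q hc
      rw [h1 p q hc, hp1 p q hc]
    · intro p q hc
      have := h2 p q hc
      have := hp2 p q hc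
      simp only at *
      linarith
end

section
/- If the response graph of a two-player game is acyclic (viewing indifference pairs as edges only when strict improvement holds in neither direction, so 'acyclic' means no directed cycle containing a strict arc), then the game is preference-equivalent to a potential game: one may construct a potential game with the same response graph by assigning to each strongly connected component of the response graph a real number respecting the reachability order. -/
/-- if the response graph has no directed cycle containing a strict
arc, then there is a potential game with the same response graph. -/
theorem acyclic_implies_pref_potential {S1 S2 : Type} [Fintype S1] [Fintype S2]
    (u1 u2 : S1 × S2 → ℝ)
    (hacyc : ∀ p q, SArc u1 u2 p q → ¬ Relation.ReflTransGen (Arc u1 u2) q p) :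
    ∃ v1 v2 φ : S1 × S2 → ℝ, IsPotential v1 v2 φ ∧
      ∀ p q, Arc u1 u2 p q ↔ Arc v1 v2 p q := by
  classical
  set R : S1 × S2 → S1 × S2 → Prop := Relation.ReflTransGen (Arc u1 u2) with hR
  set φ : S1 × S2 → ℝ := fun p => (Set.ncard {r | R r p} : ℝ) with hφ
  have hmono : ∀ p q, Arc u1 u2 p q → φ p ≤ φ q := by
    intro p q h
    have hsub : {r | R r p} ⊆ {r | R r q} := fun r hr =>
      Relation.ReflTransGen.tail hr h
    have := Set.ncard_le_ncard hsub (Set.toFinite _)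
    simp only [hφ]
    exact_mod_cast this
  have hstrict : ∀ p q, SArc u1 u2 p q → φ p < φ q := by
    intro p q h
    have harc : Arc u1 u2 p q := by
      rcases h with ⟨h1, h2⟩ | ⟨h1, h2⟩
      · exact Or.inl ⟨h1, le_of_lt h2⟩
      · exact Or.inr ⟨h1, le_of_lt h2⟩
    have hsub : {r | R r p} ⊆ {r | R r q} := fun r hr =>
      Relation.ReflTransGen.tail hr harc
    have hq : q ∈ {r | R r q} := Relation.ReflTransGen.refl
    have hqp : q ∉ {r | R r p} := hacyc p q h
    have : Set.ncard {r | R r p} < Set.ncard {r | R r q} :=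
      Set.ncard_lt_ncard ⟨hsub, fun h' => hqp (h' hq)⟩ (Set.toFinite _)
    simp only [hφ]
    exact_mod_cast this
  refine ⟨φ, φ, φ, ⟨fun p q _ => rfl, fun p q _ => rfl⟩, ?_⟩
  intro p q
  constructor
  · intro h
    have := hmono p q h
    rcases h with ⟨h1, _⟩ | ⟨h1, _⟩
    · exact Or.inl ⟨h1, this⟩
    · exact Or.inr ⟨h1, this⟩
  · rintro (⟨h1, hle⟩ | ⟨h1, hle⟩)
    · by_cases hc : u1 p ≤ u1 q
      · exact Or.inl ⟨h1, hc⟩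
      · have : SArc u1 u2 q p := Or.inl ⟨⟨h1.1.symm, h1.2.symm⟩, lt_of_not_ge hc⟩
        exact absurd hle (not_le.mpr (hstrict q p this))
    · by_cases hc : u2 p ≤ u2 q
      · exact Or.inr ⟨h1, hc⟩
      · have : SArc u1 u2 q p := Or.inr ⟨⟨h1.1.symm, h1.2.symm⟩, lt_of_not_ge hc⟩
        exact absurd hle (not_le.mpr (hstrict q p this))
end

section
/- A two-player game (u1,u2) is preference-equivalent to a zero-sum game if and only if its reflection (u1,-u2) is preference-equivalent to a potential game. -/
section AuxPref
variable {S1 S2 T1 T2 : Type}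

lemma comp1_symm {p q : S1 × S2} (h : Comp1 p q) : Comp1 q p := ⟨h.1.symm, h.2.symm⟩
lemma comp2_symm {p q : S1 × S2} (h : Comp2 p q) : Comp2 q p := ⟨h.1.symm, h.2.symm⟩
lemma comparable_symm {p q : S1 × S2} (h : Comparable p q) : Comparable q p :=
  h.elim (fun h => Or.inl (comp1_symm h)) (fun h => Or.inr (comp2_symm h))

lemma arc_comp1 {u1 u2 : S1 × S2 → ℝ} {p q : S1 × S2} (h : Comp1 p q) :
    Arc u1 u2 p q ↔ u1 p ≤ u1 q := by
  constructor
  · rintro (⟨_, hle⟩ | ⟨h2, _⟩)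
    · exact hle
    · exact absurd h2.1 h.1
  · exact fun hle => Or.inl ⟨h, hle⟩

lemma arc_comp2 {u1 u2 : S1 × S2 → ℝ} {p q : S1 × S2} (h : Comp2 p q) :
    Arc u1 u2 p q ↔ u2 p ≤ u2 q := by
  constructor
  · rintro (⟨h1, _⟩ | ⟨_, hle⟩)
    · exact absurd h.1 h1.1
    · exact hle
  · exact fun hle => Or.inr ⟨h, hle⟩

lemma arc_comparable {u1 u2 : S1 × S2 → ℝ} {p q : S1 × S2} (h : Arc u1 u2 p q) :
    Comparable p q := h.elim (fun h => Or.inl h.1) (fun h => Or.inr h.1)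

lemma comparable_iff_arc (u1 u2 : S1 × S2 → ℝ) (p q : S1 × S2) :
    Comparable p q ↔ (Arc u1 u2 p q ∨ Arc u1 u2 q p) := by
  constructor
  · rintro (h | h)
    · rcases le_total (u1 p) (u1 q) with hle | hle
      · exact Or.inl (Or.inl ⟨h, hle⟩)
      · exact Or.inr (Or.inl ⟨comp1_symm h, hle⟩)
    · rcases le_total (u2 p) (u2 q) with hle | hle
      · exact Or.inl (Or.inr ⟨h, hle⟩)
      · exact Or.inr (Or.inr ⟨comp2_symm h, hle⟩)
  · rintro (h | h)
    · exact arc_comparable h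
    · exact comparable_symm (arc_comparable h)

lemma comp2_iff_not_comp1 {p q : S1 × S2} (h : Comparable p q) :
    Comp2 p q ↔ ¬ Comp1 p q := by
  constructor
  · exact fun h2 h1 => h1.1 h2.1
  · intro h1
    rcases h with h | h
    · exact absurd h h1
    · exact h

lemma comp1_of_comp1_comp1 {p q r : S1 × S2} (hq : Comp1 p q) (hr : Comp1 p r)
    (hne : q ≠ r) : Comp1 q r := by
  have h2 : q.2 = r.2 := hq.2.symm.trans hr.2
  exact ⟨fun h1 => hne (Prod.ext h1 h2), h2⟩

lemma comp2_of_comp2_comp2 {p q r : S1 × S2} (hq : Comp2 p q) (hr : Comp2 p r)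
    (hne : q ≠ r) : Comp2 q r := by
  have h1 : q.1 = r.1 := hq.1.symm.trans hr.1
  exact ⟨h1, fun h2 => hne (Prod.ext h1 h2)⟩

lemma mixed_not_comparable {p q r : S1 × S2} (hq : Comp1 p q) (hr : Comp2 p r) :
    ¬ Comparable q r ∧ q ≠ r := by
  have h1 : q.1 ≠ r.1 := fun h => hq.1 (hr.1.trans h.symm)
  have h2 : q.2 ≠ r.2 := fun h => hr.2 (hq.2.trans h)
  exact ⟨fun hc => hc.elim (fun h => h2 h.2) (fun h => h1 h.1), fun h => h1 (by rw [h])⟩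

/-- In a rook's graph, a triangle lies in a single line. -/
lemma same_type_of_triangle {a b c : S1 × S2} (hab : Comparable a b) (hac : Comparable a c)
    (hbc : Comparable b c) : Comp1 a b ↔ Comp1 a c := by
  rcases hab with h1 | h2
  · rcases hac with h1' | h2'
    · exact iff_of_true h1 h1'
    · exact absurd hbc (mixed_not_comparable h1 h2').1
  · rcases hac with h1' | h2'
    · exact absurd (comparable_symm hbc) (mixed_not_comparable h1' h2).1
    · exact iff_of_false (fun h => h.1 h2.1) (fun h => h.1 h2'.1)

/-- Two edges at a common vertex with non-adjacent far endpoints have different types. -/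
lemma diff_type_of_nonadj {a b c : S1 × S2} (hab : Comparable a b) (hac : Comparable a c)
    (hbc : ¬ Comparable b c) (hne : b ≠ c) : Comp1 a b ↔ Comp2 a c := by
  rcases hab with h1 | h2
  · rcases hac with h1' | h2'
    · exact absurd (Or.inl (comp1_of_comp1_comp1 h1 h1' hne)) hbc
    · exact iff_of_true h1 h2'
  · rcases hac with h1' | h2'
    · exact iff_of_false (fun h => h.1 h2.1) (fun h => h1'.1 h.1)
    · exact absurd (Or.inr (comp2_of_comp2_comp2 h2 h2' hne)) hbc

/-- `e` preserves the "type" (which player deviates) of the comparable pair `(p, q)`. -/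
def TypePres (e : (S1 × S2) ≃ (T1 × T2)) (p q : S1 × S2) : Prop :=
  (Comp1 p q ∧ Comp1 (e p) (e q)) ∨ (Comp2 p q ∧ Comp2 (e p) (e q))

lemma typePres_symm {e : (S1 × S2) ≃ (T1 × T2)} {p q : S1 × S2}
    (h : TypePres e p q) : TypePres e q p :=
  h.elim (fun h => Or.inl ⟨comp1_symm h.1, comp1_symm h.2⟩)
    (fun h => Or.inr ⟨comp2_symm h.1, comp2_symm h.2⟩)

lemma typePres_step (e : (S1 × S2) ≃ (T1 × T2))
    (hcomp : ∀ p q : S1 × S2, Comparable p q ↔ Comparable (e p) (e q))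
    {p q r : S1 × S2} (hq : Comparable p q) (hr : Comparable p r) :
    TypePres e p q ↔ TypePres e p r := by
  by_cases hqr : q = r
  · subst hqr; rfl
  have hcq : Comparable (e p) (e q) := (hcomp p q).mp hq
  have hcr : Comparable (e p) (e r) := (hcomp p r).mp hr
  have hne' : e q ≠ e r := fun h => hqr (e.injective h)
  rcases hq with h1q | h2q
  · rcases hr with h1r | h2r
    · -- both Comp1 : triangle
      have htr : Comparable q r := Or.inl (comp1_of_comp1_comp1 h1q h1r hqr)
      have hctr : Comparable (e q) (e r) := (hcomp q r).mp htr
      have hs : Comp1 (e p) (e q) ↔ Comp1 (e p) (e r) :=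
        same_type_of_triangle hcq hcr hctr
      constructor
      · rintro (⟨_, hi⟩ | ⟨h2, _⟩)
        · exact Or.inl ⟨h1r, hs.mp hi⟩
        · exact absurd h2.1 h1q.1
      · rintro (⟨_, hi⟩ | ⟨h2, _⟩)
        · exact Or.inl ⟨h1q, hs.mpr hi⟩
        · exact absurd h2.1 h1r.1
    · -- Comp1 p q, Comp2 p r : mixed
      obtain ⟨hnc, _⟩ := mixed_not_comparable h1q h2r
      have hnc' : ¬ Comparable (e q) (e r) := fun h => hnc ((hcomp q r).mpr h)
      have hd : Comp1 (e p) (e q) ↔ Comp2 (e p) (e r) :=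
        diff_type_of_nonadj hcq hcr hnc' hne'
      constructor
      · rintro (⟨_, hi⟩ | ⟨h2, _⟩)
        · exact Or.inr ⟨h2r, hd.mp hi⟩
        · exact absurd h2.1 h1q.1
      · rintro (⟨h1, _⟩ | ⟨_, hi⟩)
        · exact absurd h2r.1 h1.1
        · exact Or.inl ⟨h1q, hd.mpr hi⟩
  · rcases hr with h1r | h2r
    · -- Comp2 p q, Comp1 p r : mixed
      obtain ⟨hnc, _⟩ := mixed_not_comparable h1r h2q
      have hnc' : ¬ Comparable (e r) (e q) := fun h => hnc ((hcomp r q).mpr h)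
      have hd : Comp1 (e p) (e r) ↔ Comp2 (e p) (e q) :=
        diff_type_of_nonadj hcr hcq hnc' (fun h => hne' h.symm)
      constructor
      · rintro (⟨h1, _⟩ | ⟨_, hi⟩)
        · exact absurd h2q.1 h1.1
        · exact Or.inl ⟨h1r, hd.mpr hi⟩
      · rintro (⟨_, hi⟩ | ⟨h2, _⟩)
        · exact Or.inr ⟨h2q, hd.mp hi⟩
        · exact absurd h2.1 h1r.1
    · -- both Comp2 : triangle
      have htr : Comparable q r := Or.inr (comp2_of_comp2_comp2 h2q h2r hqr)
      have hctr : Comparable (e q) (e r) := (hcomp q r).mp htr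
      have hs1 : Comp1 (e p) (e q) ↔ Comp1 (e p) (e r) :=
        same_type_of_triangle hcq hcr hctr
      have hs : Comp2 (e p) (e q) ↔ Comp2 (e p) (e r) := by
        rw [comp2_iff_not_comp1 hcq, comp2_iff_not_comp1 hcr, hs1]
      constructor
      · rintro (⟨h1, _⟩ | ⟨_, hi⟩)
        · exact absurd h2q.1 h1.1
        · exact Or.inr ⟨h2r, hs.mp hi⟩
      · rintro (⟨h1, _⟩ | ⟨_, hi⟩)
        · exact absurd h2r.1 h1.1
        · exact Or.inr ⟨h2q, hs.mpr hi⟩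

lemma typePres_global (e : (S1 × S2) ≃ (T1 × T2))
    (hcomp : ∀ p q : S1 × S2, Comparable p q ↔ Comparable (e p) (e q))
    {p q p' q' : S1 × S2} (hq : Comparable p q) (hq' : Comparable p' q') :
    TypePres e p q ↔ TypePres e p' q' := by
  have sym : ∀ a b : S1 × S2, TypePres e a b ↔ TypePres e b a :=
    fun a b => ⟨typePres_symm, typePres_symm⟩
  by_cases hpp : p = p'
  · subst hpp; exact typePres_step e hcomp hq hq'
  by_cases hc : Comparable p p'
  · exact ((typePres_step e hcomp hq hc).trans (sym p p')).trans
      (typePres_step e hcomp (comparable_symm hc) hq')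
  · have h1 : p.1 ≠ p'.1 := by
      intro h
      by_cases h2 : p.2 = p'.2
      · exact hpp (Prod.ext h h2)
      · exact hc (Or.inr ⟨h, h2⟩)
    have h2 : p.2 ≠ p'.2 := fun h => hc (Or.inl ⟨h1, h⟩)
    set m : S1 × S2 := (p'.1, p.2) with hm
    have hpm : Comparable p m := Or.inl ⟨h1, rfl⟩
    have hmp' : Comparable m p' := Or.inr ⟨rfl, h2⟩
    calc TypePres e p q ↔ TypePres e p m := typePres_step e hcomp hq hpm
      _ ↔ TypePres e m p := sym p m
      _ ↔ TypePres e m p' := typePres_step e hcomp (comparable_symm hpm) hmp'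
      _ ↔ TypePres e p' m := sym m p'
      _ ↔ TypePres e p' q' := typePres_step e hcomp (comparable_symm hmp') hq'

lemma forward_key (u1 u2 : S1 × S2 → ℝ) (v : T1 × T2 → ℝ)
    (e : (S1 × S2) ≃ (T1 × T2))
    (h : ∀ p q, Arc u1 u2 p q ↔ Arc v (fun x => -v x) (e p) (e q)) :
    ∃ ψ : S1 × S2 → ℝ, ∀ p q, Arc u1 (fun x => -u2 x) p q ↔ Arc ψ ψ p q := by
  have hcomp : ∀ p q : S1 × S2, Comparable p q ↔ Comparable (e p) (e q) := by
    intro p q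
    rw [comparable_iff_arc u1 u2, comparable_iff_arc v (fun x => -v x), h, h]
  by_cases hex : ∃ a b : S1 × S2, Comparable a b ∧ TypePres e a b
  · obtain ⟨a, b, hab, hT⟩ := hex
    refine ⟨fun x => v (e x), fun p q => ?_⟩
    by_cases hpq : Comparable p q
    · have hT' : TypePres e p q := (typePres_global e hcomp hpq hab).mpr hT
      rcases hT' with ⟨h1, h1'⟩ | ⟨h2, h2'⟩
      · rw [arc_comp1 h1, arc_comp1 h1]
        have h' := h p q
        rw [arc_comp1 h1, arc_comp1 h1'] at h'
        exact h'
      · rw [arc_comp2 h2, arc_comp2 h2]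
        have h' := h q p
        rw [arc_comp2 (comp2_symm h2), arc_comp2 (comp2_symm h2')] at h'
        simp only [neg_le_neg_iff] at h'
        -- h' : u2 q ≤ u2 p ↔ v (e p) ≤ v (e q)
        show -u2 p ≤ -u2 q ↔ v (e p) ≤ v (e q)
        rw [neg_le_neg_iff]
        exact h'
    · exact iff_of_false (fun harc => hpq (arc_comparable harc))
        (fun harc => hpq (arc_comparable harc))
  · refine ⟨fun x => -(v (e x)), fun p q => ?_⟩
    by_cases hpq : Comparable p q
    · have hnT : ¬ TypePres e p q := fun hT => hex ⟨p, q, hpq, hT⟩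
      have hcq : Comparable (e p) (e q) := (hcomp p q).mp hpq
      rcases hpq with h1 | h2
      · have h2' : Comp2 (e p) (e q) :=
          (comp2_iff_not_comp1 hcq).mpr (fun h1' => hnT (Or.inl ⟨h1, h1'⟩))
        rw [arc_comp1 h1, arc_comp1 h1]
        have h' := h p q
        rw [arc_comp1 h1, arc_comp2 h2'] at h'
        exact h'
      · have h1' : Comp1 (e p) (e q) := by
          rcases hcq with hh | hh
          · exact hh
          · exact absurd (Or.inr ⟨h2, hh⟩) hnT
        rw [arc_comp2 h2, arc_comp2 h2]
        have h' := h q p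
        rw [arc_comp2 (comp2_symm h2), arc_comp1 (comp1_symm h1')] at h'
        -- h' : u2 q ≤ u2 p ↔ v (e q) ≤ v (e p)
        show -u2 p ≤ -u2 q ↔ -(v (e p)) ≤ -(v (e q))
        rw [neg_le_neg_iff, neg_le_neg_iff]
        exact h'
    · exact iff_of_false (fun harc => hpq (arc_comparable harc))
        (fun harc => hpq (arc_comparable harc))

lemma backward_key (u1 u2 : S1 × S2 → ℝ) (φ : T1 × T2 → ℝ)
    (e : (S1 × S2) ≃ (T1 × T2))
    (h : ∀ p q, Arc u1 (fun x => -u2 x) p q ↔ Arc φ φ (e p) (e q)) :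
    ∀ p q, Arc u1 u2 p q ↔ Arc (fun x => φ (e x)) (fun x => -(φ (e x))) p q := by
  have hcomp : ∀ p q : S1 × S2, Comparable p q ↔ Comparable (e p) (e q) := by
    intro p q
    rw [comparable_iff_arc u1 (fun x => -u2 x), comparable_iff_arc φ φ, h, h]
  intro p q
  by_cases hpq : Comparable p q
  · have hcq : Comparable (e p) (e q) := (hcomp p q).mp hpq
    rcases hpq with h1 | h2
    · rw [arc_comp1 h1, arc_comp1 h1]
      have h' := h p q
      rw [arc_comp1 h1] at h'
      have harc : Arc φ φ (e p) (e q) ↔ φ (e p) ≤ φ (e q) := by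
        rcases hcq with hh | hh
        · exact arc_comp1 hh
        · exact arc_comp2 hh
      rw [harc] at h'
      exact h'
    · rw [arc_comp2 h2, arc_comp2 h2]
      have h' := h q p
      rw [arc_comp2 (comp2_symm h2)] at h'
      have harc : Arc φ φ (e q) (e p) ↔ φ (e q) ≤ φ (e p) := by
        rcases comparable_symm hcq with hh | hh
        · exact arc_comp1 hh
        · exact arc_comp2 hh
      rw [harc] at h'
      -- h' : -u2 q ≤ -u2 p ↔ φ (e q) ≤ φ (e p)
      simp only [neg_le_neg_iff] at h'
      -- h' : u2 p ≤ u2 q ↔ φ (e q) ≤ φ (e p)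
      show u2 p ≤ u2 q ↔ -(φ (e p)) ≤ -(φ (e q))
      rw [neg_le_neg_iff]
      exact h'
  · exact iff_of_false (fun harc => hpq (arc_comparable harc))
      (fun harc => hpq (arc_comparable harc))

end AuxPref

lemma isPotential_arc {S1 S2 : Type} {v1 v2 φ : S1 × S2 → ℝ} (h : IsPotential v1 v2 φ) :
    ∀ p q, Arc v1 v2 p q ↔ Arc φ φ p q := by
  intro p q
  constructor
  · rintro (⟨h1, hle⟩ | ⟨h2, hle⟩)
    · exact Or.inl ⟨h1, by have := h.1 p q h1; linarith⟩
    · exact Or.inr ⟨h2, by have := h.2 p q h2; linarith⟩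
  · rintro (⟨h1, hle⟩ | ⟨h2, hle⟩)
    · exact Or.inl ⟨h1, by have := h.1 p q h1; linarith⟩
    · exact Or.inr ⟨h2, by have := h.2 p q h2; linarith⟩

/-- a game is preference-equivalent to a zero-sum game iff its
reflection is preference-equivalent to a potential game. -/
theorem pref_zero_sum_iff_reflection_pref_potential {S1 S2 : Type}
    (u1 u2 : S1 × S2 → ℝ) :
    PrefZeroSum u1 u2 ↔ PrefPotential u1 (fun p => -u2 p) := by
  constructor
  · rintro ⟨T1, T2, v, e, harc⟩
    obtain ⟨ψ, hψ⟩ := forward_key u1 u2 v e harc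
    exact ⟨S1, S2, ψ, ψ, ψ, ⟨fun p q _ => rfl, fun p q _ => rfl⟩,
      Equiv.refl _, fun p q => hψ p q⟩
  · rintro ⟨T1, T2, v1, v2, φ, hpot, e, harc⟩
    have harc' : ∀ p q, Arc u1 (fun x => -u2 x) p q ↔ Arc φ φ (e p) (e q) := by
      intro p q
      exact (harc p q).trans (isPotential_arc hpot (e p) (e q))
    exact ⟨S1, S2, fun x => φ (e x), Equiv.refl _,
      fun p q => backward_key u1 u2 φ e harc' p q⟩
end

section
/- If a two-player game does not contain a Coordination subgame (i.e., no 2×2 subgame whose response graph is a weak form of Coordination with at least one strict arc into each of the two 'equilibrium' corners), then the set of profiles lying in sink strongly connected components of the response graph is a near-subgame: for any two such profiles (a,b) and (x,y), at least one of (a,y) or (x,b) also lies in a sink component. -/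
/-- The game contains a (weak) Coordination subgame with at least one strict arc
into each of the two equilibrium corners. -/
def ContainsWeakCO {S1 S2 : Type} (u1 u2 : S1 × S2 → ℝ) : Prop :=
  ∃ (a x : S1) (b y : S2), a ≠ x ∧ b ≠ y ∧
    u2 (a, y) ≤ u2 (a, b) ∧ u1 (x, b) ≤ u1 (a, b) ∧
    (u2 (a, y) < u2 (a, b) ∨ u1 (x, b) < u1 (a, b)) ∧
    u2 (x, b) ≤ u2 (x, y) ∧ u1 (a, y) ≤ u1 (x, y) ∧
    (u2 (x, b) < u2 (x, y) ∨ u1 (a, y) < u1 (x, y))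

/-- A profile with an arc from a sink profile is itself in a sink component. -/
theorem sink_arc_aux {S1 S2 : Type} (u1 u2 : S1 × S2 → ℝ) {p q : S1 × S2}
    (hp : InSink u1 u2 p) (h : Arc u1 u2 p q) : InSink u1 u2 q := by
  intro r hqr
  have hpq : Reach u1 u2 p q := Relation.ReflTransGen.single h
  exact (hp r (hpq.trans hqr)).trans hpq

/-- if a game contains no Coordination subgame, the set of profiles
lying in sink components is a near-subgame. -/
theorem no_CO_sink_near_subgame {S1 S2 : Type} [Fintype S1] [Fintype S2]
    (u1 u2 : S1 × S2 → ℝ) (hCO : ¬ ContainsWeakCO u1 u2) :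
    ∀ (a x : S1) (b y : S2), InSink u1 u2 (a, b) → InSink u1 u2 (x, y) →
      InSink u1 u2 (a, y) ∨ InSink u1 u2 (x, b) := by
  intro a x b y hab hxy
  by_cases hax : a = x
  · subst hax; exact Or.inr hab
  by_cases hby : b = y
  · subst hby; exact Or.inl hab
  by_cases h1 : u2 (a, b) ≤ u2 (a, y)
  · exact Or.inl (sink_arc_aux u1 u2 hab (Or.inr ⟨⟨rfl, hby⟩, h1⟩))
  by_cases h2 : u1 (a, b) ≤ u1 (x, b)
  · exact Or.inr (sink_arc_aux u1 u2 hab (Or.inl ⟨⟨hax, rfl⟩, h2⟩))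
  by_cases h3 : u2 (x, y) ≤ u2 (x, b)
  · exact Or.inr (sink_arc_aux u1 u2 hxy (Or.inr ⟨⟨rfl, Ne.symm hby⟩, h3⟩))
  by_cases h4 : u1 (x, y) ≤ u1 (a, y)
  · exact Or.inl (sink_arc_aux u1 u2 hxy (Or.inl ⟨⟨Ne.symm hax, rfl⟩, h4⟩))
  push_neg at h1 h2 h3 h4
  exact absurd ⟨a, x, b, y, hax, hby, h1.le, h2.le, Or.inl h1, h3.le, h4.le, Or.inl h3⟩ hCO
end

section
/- If a two-player game does not contain a Coordination subgame, then its response graph has exactly one sink strongly connected component. -/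
/-- The game contains a Coordination subgame: two opposite corners each receive
arcs from (and send no strict arcs to) both of their comparable neighbors. -/
def ContainsCO {S1 S2 : Type} (u1 u2 : S1 × S2 → ℝ) : Prop :=
  ∃ (a x : S1) (b y : S2), a ≠ x ∧ b ≠ y ∧
    u2 (a, y) ≤ u2 (a, b) ∧ u1 (x, b) ≤ u1 (a, b) ∧
    u2 (x, b) ≤ u2 (x, y) ∧ u1 (a, y) ≤ u1 (x, y)

lemma sinkClosed {S1 S2 : Type} (u1 u2 : S1 × S2 → ℝ) {p r : S1 × S2}
    (hp : InSink u1 u2 p) (h : Reach u1 u2 p r) :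
    InSink u1 u2 r ∧ Reach u1 u2 r p := by
  refine ⟨fun q hq => ?_, hp r h⟩
  have hpq : Reach u1 u2 p q := h.trans hq
  exact (hp q hpq).trans h

/-- if a game contains no Coordination subgame, its response graph
has exactly one sink strongly connected component. -/
theorem no_CO_unique_sink {S1 S2 : Type} [Fintype S1] [Fintype S2]
    [Nonempty S1] [Nonempty S2] (u1 u2 : S1 × S2 → ℝ)
    (hCO : ¬ ContainsCO u1 u2) :
    (∃ p, InSink u1 u2 p) ∧
      ∀ p q, InSink u1 u2 p → InSink u1 u2 q → Reach u1 u2 p q := by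
  classical
  constructor
  · -- existence of a sink component: minimize the number of reachable profiles
    obtain ⟨p, -, hp⟩ := Finset.exists_min_image Finset.univ
      (fun p => (Finset.univ.filter (fun r => Reach u1 u2 p r)).card)
      ⟨Classical.arbitrary _, Finset.mem_univ _⟩
    refine ⟨p, fun q hq => ?_⟩
    by_contra hqp
    have hsub : (Finset.univ.filter (fun r => Reach u1 u2 q r)) ⊂
        (Finset.univ.filter (fun r => Reach u1 u2 p r)) := by
      constructor
      · intro r hr
        simp only [Finset.mem_filter, Finset.mem_univ, true_and] at hr ⊢
        exact hq.trans hr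
      · intro hsup
        have hpmem : p ∈ Finset.univ.filter (fun r => Reach u1 u2 p r) := by
          simp only [Finset.mem_filter, Finset.mem_univ, true_and]
          exact Relation.ReflTransGen.refl
        have := hsup hpmem
        simp only [Finset.mem_filter, Finset.mem_univ, true_and] at this
        exact hqp this
    have h1 := Finset.card_lt_card hsub
    have h2 := hp q (Finset.mem_univ q)
    omega
  · rintro ⟨a, b⟩ ⟨x, y⟩ hp hq
    by_contra hpq
    -- symmetric reach from sinks
    have ofReach : Reach u1 u2 (a, b) (x, y) ∨ Reach u1 u2 (x, y) (a, b) →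
        Reach u1 u2 (a, b) (x, y) := by
      rintro (h | h)
      · exact h
      · exact hq _ h
    by_cases hax : a = x
    · by_cases hby : b = y
      · subst hax; subst hby; exact hpq Relation.ReflTransGen.refl
      · subst hax
        refine hpq (ofReach ?_)
        rcases le_total (u2 (a, b)) (u2 (a, y)) with h | h
        · exact Or.inl (Relation.ReflTransGen.single (Or.inr ⟨⟨rfl, hby⟩, h⟩))
        · exact Or.inr (Relation.ReflTransGen.single (Or.inr ⟨⟨rfl, Ne.symm hby⟩, h⟩))
    · by_cases hby : b = y
      · subst hby
        refine hpq (ofReach ?_)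
        rcases le_total (u1 (a, b)) (u1 (x, b)) with h | h
        · exact Or.inl (Relation.ReflTransGen.single (Or.inl ⟨⟨hax, rfl⟩, h⟩))
        · exact Or.inr (Relation.ReflTransGen.single (Or.inl ⟨⟨Ne.symm hax, rfl⟩, h⟩))
      · -- main case: derive a Coordination subgame
        have h1 : ¬ Arc u1 u2 (a, b) (x, b) := by
          intro har
          have hr : Reach u1 u2 (a, b) (x, b) := Relation.ReflTransGen.single har
          obtain ⟨hs, hback⟩ := sinkClosed u1 u2 hp hr
          rcases le_total (u2 (x, b)) (u2 (x, y)) with h | h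
          · exact hpq (hr.trans (Relation.ReflTransGen.single (Or.inr ⟨⟨rfl, hby⟩, h⟩)))
          · have step : Reach u1 u2 (x, y) (x, b) :=
              Relation.ReflTransGen.single (Or.inr ⟨⟨rfl, Ne.symm hby⟩, h⟩)
            exact hpq (hq _ (step.trans hback))
        have h2 : ¬ Arc u1 u2 (x, y) (x, b) := by
          intro har
          have hr : Reach u1 u2 (x, y) (x, b) := Relation.ReflTransGen.single har
          obtain ⟨hs, hback⟩ := sinkClosed u1 u2 hq hr
          rcases le_total (u1 (x, b)) (u1 (a, b)) with h | h
          · have : Reach u1 u2 (x, y) (a, b) :=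
              hr.trans (Relation.ReflTransGen.single (Or.inl ⟨⟨Ne.symm hax, rfl⟩, h⟩))
            exact hpq (hq _ this)
          · have step : Reach u1 u2 (a, b) (x, b) :=
              Relation.ReflTransGen.single (Or.inl ⟨⟨hax, rfl⟩, h⟩)
            exact hpq (step.trans hback)
        have h3 : ¬ Arc u1 u2 (a, b) (a, y) := by
          intro har
          have hr : Reach u1 u2 (a, b) (a, y) := Relation.ReflTransGen.single har
          obtain ⟨hs, hback⟩ := sinkClosed u1 u2 hp hr
          rcases le_total (u1 (a, y)) (u1 (x, y)) with h | h
          · exact hpq (hr.trans (Relation.ReflTransGen.single (Or.inl ⟨⟨hax, rfl⟩, h⟩)))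
          · have step : Reach u1 u2 (x, y) (a, y) :=
              Relation.ReflTransGen.single (Or.inl ⟨⟨Ne.symm hax, rfl⟩, h⟩)
            exact hpq (hq _ (step.trans hback))
        have h4 : ¬ Arc u1 u2 (x, y) (a, y) := by
          intro har
          have hr : Reach u1 u2 (x, y) (a, y) := Relation.ReflTransGen.single har
          obtain ⟨hs, hback⟩ := sinkClosed u1 u2 hq hr
          rcases le_total (u2 (a, y)) (u2 (a, b)) with h | h
          · have : Reach u1 u2 (x, y) (a, b) :=
              hr.trans (Relation.ReflTransGen.single (Or.inr ⟨⟨rfl, Ne.symm hby⟩, h⟩))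
            exact hpq (hq _ this)
          · have step : Reach u1 u2 (a, b) (a, y) :=
              Relation.ReflTransGen.single (Or.inr ⟨⟨rfl, hby⟩, h⟩)
            exact hpq (step.trans hback)
        -- extract the four inequalities
        have i1 : u1 (x, b) ≤ u1 (a, b) :=
          le_of_lt (not_le.mp (fun hle => h1 (Or.inl ⟨⟨hax, rfl⟩, hle⟩)))
        have i2 : u2 (x, b) ≤ u2 (x, y) :=
          le_of_lt (not_le.mp (fun hle => h2 (Or.inr ⟨⟨rfl, Ne.symm hby⟩, hle⟩)))
        have i3 : u2 (a, y) ≤ u2 (a, b) :=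
          le_of_lt (not_le.mp (fun hle => h3 (Or.inr ⟨⟨rfl, hby⟩, hle⟩)))
        have i4 : u1 (a, y) ≤ u1 (x, y) :=
          le_of_lt (not_le.mp (fun hle => h4 (Or.inl ⟨⟨Ne.symm hax, rfl⟩, hle⟩)))
        exact hCO ⟨a, x, b, y, hax, hby, i3, i1, i2, i4⟩
end

section
/- Every two-player game whose response graph is preference-equivalent to that of a zero-sum game has exactly one sink strongly connected component in its response graph. -/
/-!
In a zero-sum game the response graph is confluent: for profiles `(a, b)` and `(c, d)`,
comparing the four values of `v` on the square `{a, c} × {b, d}` always yields a corner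
reachable from both, because the two players move along the same linear order in opposite
directions, so the square cannot have two opposite corners that are both local sinks.
Confluence is invariant under graph isomorphism. In a finite graph a vertex with the fewest
reachable vertices lies in a sink component, and under confluence any two sink components
reach each other, so there is exactly one.
-/

theorem Finite.exists_sink_reflTransGen {α : Type*} [Finite α] [Nonempty α]
    (r : α → α → Prop) :
    ∃ p, ∀ q, Relation.ReflTransGen r p q → Relation.ReflTransGen r q p := by
  obtain ⟨p, hp⟩ := Finite.exists_min fun x => {y | Relation.ReflTransGen r x y}.ncard
  refine ⟨p, fun q hpq => ?_⟩
  have hsub : {y | Relation.ReflTransGen r q y} ⊆ {y | Relation.ReflTransGen r p y} :=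
    fun y hqy => hpq.trans hqy
  show p ∈ {y | Relation.ReflTransGen r q y}
  exact Set.eq_of_subset_of_ncard_le hsub (hp q) ▸ Relation.ReflTransGen.refl

namespace ZeroSum

variable {T1 T2 : Type} (v : T1 × T2 → ℝ)

theorem reach_of_le_fst {a c : T1} {b : T2} (h : v (a, b) ≤ v (c, b)) :
    Reach v (fun p => -v p) (a, b) (c, b) := by
  by_cases hac : a = c
  · exact hac ▸ .refl
  · exact .single (Or.inl ⟨⟨hac, rfl⟩, h⟩)

theorem reach_of_le_snd {a : T1} {b d : T2} (h : v (a, d) ≤ v (a, b)) :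
    Reach v (fun p => -v p) (a, b) (a, d) := by
  by_cases hbd : b = d
  · exact hbd ▸ .refl
  · exact .single (Or.inr ⟨⟨rfl, hbd⟩, neg_le_neg h⟩)

theorem join_reach (p q : T1 × T2) :
    Relation.Join (Reach v (fun p => -v p)) p q := by
  obtain ⟨a, b⟩ := p
  obtain ⟨c, d⟩ := q
  rcases le_total (v (a, b)) (v (c, b)) with hab | hcb
  · rcases le_total (v (c, b)) (v (c, d)) with hb | hd
    · exact ⟨(c, b), reach_of_le_fst v hab, reach_of_le_snd v hb⟩
    · exact ⟨(c, d), (reach_of_le_fst v hab).trans (reach_of_le_snd v hd), .refl⟩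
  rcases le_total (v (c, b)) (v (c, d)) with hb | hd
  · exact ⟨(a, b), .refl, (reach_of_le_snd v hb).trans (reach_of_le_fst v hcb)⟩
  rcases le_total (v (a, d)) (v (a, b)) with had | hba
  · rcases le_total (v (c, d)) (v (a, d)) with hcd | hdc
    · exact ⟨(a, d), reach_of_le_snd v had, reach_of_le_fst v hcd⟩
    · exact ⟨(c, d), (reach_of_le_snd v had).trans (reach_of_le_fst v hdc), .refl⟩
  · exact ⟨(a, b), .refl,
      (reach_of_le_fst v ((hd.trans hcb).trans hba)).trans (reach_of_le_snd v hba)⟩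

end ZeroSum

theorem PrefEquiv.join_reach {S1 S2 T1 T2 : Type} {u1 u2 : S1 × S2 → ℝ}
    {v1 v2 : T1 × T2 → ℝ} (h : PrefEquiv u1 u2 v1 v2)
    (hv : ∀ x y, Relation.Join (Reach v1 v2) x y) (p q : S1 × S2) :
    Relation.Join (Reach u1 u2) p q := by
  obtain ⟨e, he⟩ := h
  have pull : ∀ x y, Reach v1 v2 x y → Reach u1 u2 (e.symm x) (e.symm y) :=
    fun x y hxy => hxy.lift e.symm fun x y hxy => (he _ _).mpr (by simpa using hxy)
  obtain ⟨r, hpr, hqr⟩ := hv (e p) (e q)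
  exact ⟨e.symm r, by simpa using pull _ _ hpr, by simpa using pull _ _ hqr⟩

/-- every preference-zero-sum game has exactly one sink strongly
connected component. -/
theorem pref_zero_sum_unique_sink {S1 S2 : Type} [Fintype S1] [Fintype S2]
    [Nonempty S1] [Nonempty S2] (u1 u2 : S1 × S2 → ℝ)
    (hzs : PrefZeroSum u1 u2) :
    (∃ p, InSink u1 u2 p) ∧
      ∀ p q, InSink u1 u2 p → InSink u1 u2 q → Reach u1 u2 p q := by
  obtain ⟨T1, T2, v, hv⟩ := hzs
  refine ⟨Finite.exists_sink_reflTransGen (Arc u1 u2), fun p q _ hq => ?_⟩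
  obtain ⟨r, hpr, hqr⟩ := hv.join_reach (ZeroSum.join_reach v) p q
  exact hpr.trans (hq r hqr)
end

section
/- A generic preference-zero-sum two-player game has at most one pure Nash equilibrium. -/
/-- a generic preference-zero-sum game has at most one pure Nash
equilibrium. -/
theorem generic_pref_zero_sum_at_most_one_PNE {S1 S2 : Type}
    [Fintype S1] [Fintype S2] (u1 u2 : S1 × S2 → ℝ)
    (hgen : Generic u1 u2) (hzs : PrefZeroSum u1 u2) :
    ∀ p q, IsPNE u1 u2 p → IsPNE u1 u2 q → p = q := by
  obtain ⟨T1, T2, v, e, he⟩ := hzs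
  intro p q hp hq
  -- A PNE has no outgoing arcs in the response graph of (u1,u2).
  have key : ∀ r, IsPNE u1 u2 r → ∀ x, ¬ Arc v (fun z => -v z) (e r) x := by
    intro r hr x harc
    obtain ⟨y, rfl⟩ := e.surjective x
    rw [← he] at harc
    rcases harc with ⟨⟨hne, heq⟩, hle⟩ | ⟨⟨heq, hne⟩, hle⟩
    · have h2 := hr.1 y.1
      have hy : (y.1, r.2) = y := by
        obtain ⟨y1, y2⟩ := y; exact Prod.ext rfl heq
      rw [hy] at h2
      exact hgen.1 r y ⟨hne, heq⟩ (le_antisymm hle h2)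
    · have h2 := hr.2 y.2
      have hy : (r.1, y.2) = y := by
        obtain ⟨y1, y2⟩ := y; exact Prod.ext heq rfl
      rw [hy] at h2
      exact hgen.2 r y ⟨heq, hne⟩ (le_antisymm hle h2)
  -- strict column maximum
  have colmax : ∀ r, IsPNE u1 u2 r → ∀ x, (e r).1 ≠ x → v (x, (e r).2) < v (e r) := by
    intro r hr x hx
    have h := key r hr (x, (e r).2)
    refine not_le.mp (fun hle => h (Or.inl ⟨⟨hx, rfl⟩, hle⟩))
  -- strict row minimum
  have rowmin : ∀ r, IsPNE u1 u2 r → ∀ y, (e r).2 ≠ y → v (e r) < v ((e r).1, y) := by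
    intro r hr y hy
    have h := key r hr ((e r).1, y)
    refine not_le.mp (fun hle => h (Or.inr ⟨⟨rfl, hy⟩, neg_le_neg hle⟩))
  set A := e p with hA
  set B := e q with hB
  have hac : A.1 = B.1 := by
    by_contra hac
    have h1 : v (B.1, A.2) < v A := colmax p hp B.1 hac
    have h4 : v (A.1, B.2) < v B := colmax q hq A.1 (Ne.symm hac)
    have h2 : v B ≤ v (B.1, A.2) := by
      rcases eq_or_ne B.2 A.2 with h | h
      · exact le_of_eq (by rw [← h])
      · exact le_of_lt (rowmin q hq A.2 h)
    have h3 : v A ≤ v (A.1, B.2) := by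
      rcases eq_or_ne A.2 B.2 with h | h
      · exact le_of_eq (by rw [← h])
      · exact le_of_lt (rowmin p hp B.2 h)
    linarith
  have hbd : A.2 = B.2 := by
    by_contra hbd
    have h1 : v A < v (A.1, B.2) := rowmin p hp B.2 hbd
    have h2 : v B < v (B.1, A.2) := rowmin q hq A.2 (Ne.symm hbd)
    rw [hac] at h1
    rw [← hac] at h2
    simp only [Prod.mk.eta] at h1 h2
    linarith
  have : A = B := Prod.ext hac hbd
  exact e.injective this
end

section
/- Every generic finite two-player game that is preference-equivalent to a potential game has a pure Nash equilibrium. -/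
/-- every generic finite preference-potential game has a pure Nash
equilibrium. -/
theorem generic_pref_potential_has_PNE {S1 S2 : Type} [Fintype S1] [Fintype S2]
    [Nonempty S1] [Nonempty S2] (u1 u2 : S1 × S2 → ℝ)
    (hgen : Generic u1 u2) (hpot : PrefPotential u1 u2) :
    ∃ p, IsPNE u1 u2 p := by
  obtain ⟨T1, T2, v1, v2, φ, ⟨hφ1, hφ2⟩, e, he⟩ := hpot
  obtain ⟨p0, hp0⟩ := Finite.exists_max (fun p : S1 × S2 => φ (e p))
  refine ⟨p0, ?_⟩
  have noarc : ∀ q, ¬ Arc u1 u2 p0 q := by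
    intro q hArc
    have hv : Arc v1 v2 (e p0) (e q) := (he p0 q).mp hArc
    have hφle : φ (e p0) ≤ φ (e q) := by
      rcases hv with ⟨hc, hle⟩ | ⟨hc, hle⟩
      · have := hφ1 _ _ hc; linarith
      · have := hφ2 _ _ hc; linarith
    have hφeq : φ (e p0) = φ (e q) := le_antisymm hφle (hp0 q)
    have hvback : Arc v1 v2 (e q) (e p0) := by
      rcases hv with ⟨hc, hle⟩ | ⟨hc, hle⟩
      · left
        refine ⟨⟨Ne.symm hc.1, hc.2.symm⟩, ?_⟩
        have := hφ1 _ _ hc; linarith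
      · right
        refine ⟨⟨hc.1.symm, Ne.symm hc.2⟩, ?_⟩
        have := hφ2 _ _ hc; linarith
    have hback : Arc u1 u2 q p0 := (he q p0).mpr hvback
    rcases hArc with ⟨hc, hle⟩ | ⟨hc, hle⟩
    · have hne := hgen.1 p0 q hc
      rcases hback with ⟨_, hle'⟩ | ⟨hc', _⟩
      · exact hne (le_antisymm hle hle')
      · exact hc.1 hc'.1.symm
    · have hne := hgen.2 p0 q hc
      rcases hback with ⟨hc', _⟩ | ⟨_, hle'⟩
      · exact hc.2 hc'.2.symm
      · exact hne (le_antisymm hle hle')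
  constructor
  · intro t
    by_contra h
    push_neg at h
    have ht : p0.1 ≠ t := by
      intro he'
      rw [← he'] at h
      simp at h
    exact noarc (t, p0.2) (Or.inl ⟨⟨ht, rfl⟩, le_of_lt h⟩)
  · intro t
    by_contra h
    push_neg at h
    have ht : p0.2 ≠ t := by
      intro he'
      rw [← he'] at h
      simp at h
    exact noarc (p0.1, t) (Or.inr ⟨⟨rfl, ht⟩, le_of_lt h⟩)
end

section
/- Any generic finite two-player game that is both preference-equivalent to a zero-sum game and preference-equivalent to a potential game is dominance-solvable. -/
/-- Dominance solvability: iterated elimination of strictly dominated pure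
strategies reduces the game to a single profile. -/
inductive DSolve {S1 S2 : Type} [DecidableEq S1] [DecidableEq S2]
    (u1 u2 : S1 × S2 → ℝ) : Finset S1 → Finset S2 → Prop
  | base (a : S1) (b : S2) : DSolve u1 u2 {a} {b}
  | elim1 (T1 : Finset S1) (T2 : Finset S2) (s t : S1) (hs : s ∈ T1) (ht : t ∈ T1)
      (hne : s ≠ t) (hdom : ∀ r ∈ T2, u1 (t, r) < u1 (s, r))
      (h : DSolve u1 u2 (T1.erase t) T2) : DSolve u1 u2 T1 T2
  | elim2 (T1 : Finset S1) (T2 : Finset S2) (s t : S2) (hs : s ∈ T2) (ht : t ∈ T2)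
      (hne : s ≠ t) (hdom : ∀ r ∈ T1, u2 (r, t) < u2 (r, s))
      (h : DSolve u1 u2 T1 (T2.erase t)) : DSolve u1 u2 T1 T2

section ZSPAux

variable {S1 S2 : Type}

namespace ZSPAux

/-! ### Basic facts about comparability -/

lemma comp1_symm {p q : S1 × S2} (h : Comp1 p q) : Comp1 q p := ⟨h.1.symm, h.2.symm⟩

lemma comp2_symm {p q : S1 × S2} (h : Comp2 p q) : Comp2 q p := ⟨h.1.symm, h.2.symm⟩

lemma comparable_symm {p q : S1 × S2} (h : Comparable p q) : Comparable q p :=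
  h.elim (fun h => Or.inl (comp1_symm h)) (fun h => Or.inr (comp2_symm h))

lemma comp1_not_comp2 {p q : S1 × S2} (h : Comp1 p q) : ¬ Comp2 p q := fun h2 => h.1 h2.1

lemma comp2_of_not_comp1 {p q : S1 × S2} (h : Comparable p q) (h1 : ¬ Comp1 p q) :
    Comp2 p q := h.resolve_left h1

lemma comparable_ne {p q : S1 × S2} (h : Comparable p q) : p ≠ q := by
  rcases h with ⟨h1, _⟩ | ⟨_, h2⟩
  · exact fun he => h1 (congrArg Prod.fst he)
  · exact fun he => h2 (congrArg Prod.snd he)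

lemma arc_comparable {u1 u2 : S1 × S2 → ℝ} {p q : S1 × S2} (h : Arc u1 u2 p q) :
    Comparable p q := h.elim (fun h => Or.inl h.1) (fun h => Or.inr h.1)

lemma arc_total (u1 u2 : S1 × S2 → ℝ) {p q : S1 × S2} (h : Comparable p q) :
    Arc u1 u2 p q ∨ Arc u1 u2 q p := by
  rcases h with h1 | h2
  · rcases le_total (u1 p) (u1 q) with hle | hle
    · exact Or.inl (Or.inl ⟨h1, hle⟩)
    · exact Or.inr (Or.inl ⟨comp1_symm h1, hle⟩)
  · rcases le_total (u2 p) (u2 q) with hle | hle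
    · exact Or.inl (Or.inr ⟨h2, hle⟩)
    · exact Or.inr (Or.inr ⟨comp2_symm h2, hle⟩)

lemma no_both {u1 u2 : S1 × S2 → ℝ} (hgen : Generic u1 u2) {p q : S1 × S2}
    (h1 : Arc u1 u2 p q) (h2 : Arc u1 u2 q p) : False := by
  rcases h1 with ⟨hc, hle⟩ | ⟨hc, hle⟩ <;> rcases h2 with ⟨hc', hle'⟩ | ⟨hc', hle'⟩
  · exact hgen.1 p q hc (le_antisymm hle hle')
  · exact hc'.2 hc.2.symm
  · exact hc.2 hc'.2.symm
  · exact hgen.2 p q hc (le_antisymm hle hle')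

/-! ### Comparability is preserved by a preference equivalence -/

section Equiv

variable {T1 T2 : Type} {u1 u2 : S1 × S2 → ℝ} {v1 v2 : T1 × T2 → ℝ}
  {e : (S1 × S2) ≃ (T1 × T2)}
  (harc : ∀ p q, Arc u1 u2 p q ↔ Arc v1 v2 (e p) (e q))

include harc in
lemma comp_iff (p q : S1 × S2) : Comparable p q ↔ Comparable (e p) (e q) := by
  constructor
  · intro h
    rcases arc_total u1 u2 h with h' | h'
    · exact arc_comparable ((harc p q).mp h')
    · exact comparable_symm (arc_comparable ((harc q p).mp h'))
  · intro h
    rcases arc_total v1 v2 h with h' | h'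
    · exact arc_comparable ((harc p q).mpr h')
    · exact comparable_symm (arc_comparable ((harc q p).mpr h'))

/- "Type" of the image pair is Comp1. We show it is consistent. -/
include harc in
lemma cs {p q r : S1 × S2} (hpq : Comparable p q) (hqr : Comparable q r)
    (hpr : Comparable p r) :
    (Comp1 (e p) (e q) ↔ Comp1 (e q) (e r)) := by
  have c1 := (comp_iff harc p q).mp hpq
  have c2 := (comp_iff harc q r).mp hqr
  have c3 := (comp_iff harc p r).mp hpr
  constructor
  · intro h1
    by_contra h2
    have h2' : Comp2 (e q) (e r) := comp2_of_not_comp1 c2 h2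
    rcases c3 with ⟨_, hc⟩ | ⟨hc, _⟩
    · exact h2'.2 (h1.2.symm.trans hc)
    · exact h1.1 (hc.trans h2'.1.symm)
  · intro h2
    by_contra h1
    have h1' : Comp2 (e p) (e q) := comp2_of_not_comp1 c1 h1
    rcases c3 with ⟨_, hc⟩ | ⟨hc, _⟩
    · exact h1'.2 (hc.trans h2.2.symm)
    · exact h2.1 (h1'.1.symm.trans hc)

include harc in
lemma ch {p q r : S1 × S2} (hpq : Comparable p q) (hqr : Comparable q r)
    (hpr : ¬ Comparable p r) (hne : p ≠ r) :
    (Comp1 (e p) (e q) ↔ ¬ Comp1 (e q) (e r)) := by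
  have c1 := (comp_iff harc p q).mp hpq
  have c2 := (comp_iff harc q r).mp hqr
  have c3 : ¬ Comparable (e p) (e r) := fun h => hpr ((comp_iff harc p r).mpr h)
  have hii : e p ≠ e r := fun h => hne (e.injective h)
  constructor
  · intro h1 h2
    by_cases hcc : (e p).1 = (e r).1
    · exact hii (Prod.ext hcc (h1.2.trans h2.2))
    · exact c3 (Or.inl ⟨hcc, h1.2.trans h2.2⟩)
  · intro h2
    by_contra h1
    have h1' : Comp2 (e p) (e q) := comp2_of_not_comp1 c1 h1
    have h2' : Comp2 (e q) (e r) := comp2_of_not_comp1 c2 h2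
    by_cases hcc : (e p).2 = (e r).2
    · exact hii (Prod.ext (h1'.1.trans h2'.1) hcc)
    · exact c3 (Or.inr ⟨h1'.1.trans h2'.1, hcc⟩)

lemma tysymm (p q : S1 × S2) : Comp1 (e p) (e q) ↔ Comp1 (e q) (e p) :=
  ⟨fun h => ⟨h.1.symm, h.2.symm⟩, fun h => ⟨h.1.symm, h.2.symm⟩⟩

include harc in
lemma t0 {p q r : S1 × S2} (hpq : Comparable p q) (hqr : Comparable q r)
    (hpr : Comparable p r ∨ p = r) :
    (Comp1 (e p) (e q) ↔ Comp1 (e q) (e r)) := by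
  rcases hpr with h | rfl
  · exact cs harc hpq hqr h
  · exact tysymm p q

include harc in
lemma line_col {x y x' y' : S1} {b : S2} (hxy : x ≠ y) (hxy' : x' ≠ y') :
    (Comp1 (e (x, b)) (e (y, b)) ↔ Comp1 (e (x', b)) (e (y', b))) := by
  have hcmp : ∀ {u v : S1}, u ≠ v → Comparable ((u, b) : S1 × S2) (v, b) :=
    fun h => Or.inl ⟨h, rfl⟩
  have hor : ∀ {u v : S1}, Comparable ((u, b) : S1 × S2) (v, b) ∨ (u, b) = (v, b) := by
    intro u v
    rcases eq_or_ne u v with h | h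
    · exact Or.inr (by rw [h])
    · exact Or.inl (hcmp h)
  by_cases hy : y = x'
  · subst hy
    exact t0 harc (hcmp hxy) (hcmp hxy') hor
  · exact (t0 harc (hcmp hxy) (hcmp hy) hor).trans (t0 harc (hcmp hy) (hcmp hxy') hor)

include harc in
lemma line_row {x y x' y' : S2} {a : S1} (hxy : x ≠ y) (hxy' : x' ≠ y') :
    (Comp1 (e (a, x)) (e (a, y)) ↔ Comp1 (e (a, x')) (e (a, y'))) := by
  have hcmp : ∀ {u v : S2}, u ≠ v → Comparable ((a, u) : S1 × S2) (a, v) :=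
    fun h => Or.inr ⟨rfl, h⟩
  have hor : ∀ {u v : S2}, Comparable ((a, u) : S1 × S2) (a, v) ∨ (a, u) = (a, v) := by
    intro u v
    rcases eq_or_ne u v with h | h
    · exact Or.inr (by rw [h])
    · exact Or.inl (hcmp h)
  by_cases hy : y = x'
  · subst hy
    exact t0 harc (hcmp hxy) (hcmp hxy') hor
  · exact (t0 harc (hcmp hxy) (hcmp hy) hor).trans (t0 harc (hcmp hy) (hcmp hxy') hor)

include harc in
lemma opp (a a' c : S1) (b d d' : S2) (haa' : a ≠ a') (hdd' : d ≠ d')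
    (a0 a1 : S1) (ha01 : a0 ≠ a1) (b0 b1 : S2) (hb01 : b0 ≠ b1) :
    (Comp1 (e (a, b)) (e (a', b)) ↔ ¬ Comp1 (e (c, d)) (e (c, d'))) := by
  -- pick z ≠ c and y ≠ b
  obtain ⟨z, hz⟩ : ∃ z : S1, z ≠ c := by
    rcases eq_or_ne c a0 with h | h
    · exact ⟨a1, by rw [h]; exact ha01.symm⟩
    · exact ⟨a0, h.symm⟩
  obtain ⟨y, hy⟩ : ∃ y : S2, y ≠ b := by
    rcases eq_or_ne b b0 with h | h
    · exact ⟨b1, by rw [h]; exact hb01.symm⟩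
    · exact ⟨b0, h.symm⟩
  have step1 : Comp1 (e (a, b)) (e (a', b)) ↔ Comp1 (e (z, b)) (e (c, b)) :=
    line_col harc haa' hz
  have step2 : Comp1 (e (z, b)) (e (c, b)) ↔ ¬ Comp1 (e (c, b)) (e (c, y)) := by
    refine ch harc (Or.inl ⟨hz, rfl⟩) (Or.inr ⟨rfl, hy.symm⟩) ?_ ?_
    · rintro (⟨_, h2⟩ | ⟨h1, _⟩)
      · exact hy h2.symm
      · exact hz h1
    · intro h
      exact hz (congrArg Prod.fst h)
  have step3 : Comp1 (e (c, b)) (e (c, y)) ↔ Comp1 (e (c, d)) (e (c, d')) :=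
    line_row harc (fun h => hy h.symm) hdd'
  rw [step1, step2, step3]

end Equiv

end ZSPAux

end ZSPAux

section ZSPAux2

namespace ZSPAux

variable {S1 S2 : Type}

section MkW

variable {T1 T2 : Type} {u1 u2 : S1 × S2 → ℝ} (v : T1 × T2 → ℝ)
  (e : (S1 × S2) ≃ (T1 × T2))

lemma mkW (hgen : Generic u1 u2)
    (harc : ∀ p q, Arc u1 u2 p q ↔ Arc v (fun p => -v p) (e p) (e q))
    (hty1 : ∀ p q : S1 × S2, Comp1 p q → Comp1 (e p) (e q))
    (hty2 : ∀ p q : S1 × S2, Comp2 p q → Comp2 (e p) (e q)) :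
    ∃ w : S1 × S2 → ℝ,
      (∀ p q, Comp1 p q → (u1 p < u1 q ↔ w p < w q)) ∧
      (∀ p q, Comp2 p q → (u2 p < u2 q ↔ w q < w p)) := by
  refine ⟨fun p => v (e p), ?_, ?_⟩
  · intro p q hc
    constructor
    · intro h
      have harcpq : Arc u1 u2 p q := Or.inl ⟨hc, h.le⟩
      rcases (harc p q).mp harcpq with ⟨_, hle⟩ | ⟨h2, _⟩
      · refine lt_of_le_of_ne hle (fun heq => ?_)
        have : Arc v (fun p => -v p) (e q) (e p) := Or.inl ⟨comp1_symm (hty1 p q hc), heq.ge⟩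
        exact no_both hgen harcpq ((harc q p).mpr this)
      · exact absurd h2 (comp1_not_comp2 (hty1 p q hc))
    · intro h
      have : Arc v (fun p => -v p) (e p) (e q) := Or.inl ⟨hty1 p q hc, h.le⟩
      rcases (harc p q).mpr this with ⟨_, hle⟩ | ⟨h2, _⟩
      · exact lt_of_le_of_ne hle (hgen.1 p q hc)
      · exact absurd h2 (comp1_not_comp2 hc)
  · intro p q hc
    constructor
    · intro h
      have harcpq : Arc u1 u2 p q := Or.inr ⟨hc, h.le⟩
      rcases (harc p q).mp harcpq with ⟨h1, _⟩ | ⟨_, hle⟩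
      · exact absurd (hty2 p q hc) (comp1_not_comp2 h1)
      · have hle' : v (e q) ≤ v (e p) := by simpa using hle
        refine lt_of_le_of_ne hle' (fun heq => ?_)
        have heq' : v (e q) = v (e p) := heq
        have : Arc v (fun p => -v p) (e q) (e p) :=
          Or.inr ⟨comp2_symm (hty2 p q hc), neg_le_neg heq'.ge⟩
        exact no_both hgen harcpq ((harc q p).mpr this)
    · intro h
      have : Arc v (fun p => -v p) (e p) (e q) :=
        Or.inr ⟨hty2 p q hc, by simpa using h.le⟩
      rcases (harc p q).mpr this with ⟨h1, _⟩ | ⟨_, hle⟩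
      · exact absurd hc (comp1_not_comp2 h1)
      · exact lt_of_le_of_ne (by simpa using hle) (hgen.2 p q hc)

lemma arc_swap (x y : T1 × T2) :
    Arc v (fun p => -v p) x y ↔
      Arc (fun z : T2 × T1 => -v z.swap) (fun z => -(fun z : T2 × T1 => -v z.swap) z)
        x.swap y.swap := by
  simp only [Arc, Comp1, Comp2, Prod.fst_swap, Prod.snd_swap, Prod.swap_swap, neg_neg,
    neg_le_neg_iff]
  constructor
  · rintro (⟨⟨h1, h2⟩, h3⟩ | ⟨⟨h1, h2⟩, h3⟩)
    · exact Or.inr ⟨⟨h2, h1⟩, h3⟩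
    · exact Or.inl ⟨⟨h2, h1⟩, by simpa using h3⟩
  · rintro (⟨⟨h1, h2⟩, h3⟩ | ⟨⟨h1, h2⟩, h3⟩)
    · exact Or.inr ⟨⟨h2, h1⟩, by simpa using h3⟩
    · exact Or.inl ⟨⟨h2, h1⟩, h3⟩

end MkW

/-- Main zero-sum transfer: from a preference-equivalence to a zero-sum game,
produce a strictly competitive ordinal transform `w`. -/
lemma zs_transfer {u1 u2 : S1 × S2 → ℝ} (hgen : Generic u1 u2)
    (hzs : PrefZeroSum u1 u2)
    (a0 a1 : S1) (ha01 : a0 ≠ a1) (b0 b1 : S2) (hb01 : b0 ≠ b1) :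
    ∃ w : S1 × S2 → ℝ,
      (∀ p q, Comp1 p q → (u1 p < u1 q ↔ w p < w q)) ∧
      (∀ p q, Comp2 p q → (u2 p < u2 q ↔ w q < w p)) := by
  obtain ⟨T1, T2, v, e, harc⟩ := hzs
  by_cases hc : Comp1 (e (a0, b0)) (e (a1, b0))
  · -- orientation preserved
    have hty1 : ∀ p q : S1 × S2, Comp1 p q → Comp1 (e p) (e q) := by
      rintro ⟨p1, p2⟩ ⟨q1, q2⟩ ⟨h1, h2⟩
      simp only at h1 h2; subst h2
      exact (opp harc p1 q1 a0 p2 b0 b1 h1 hb01 a0 a1 ha01 b0 b1 hb01).mpr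
        ((opp harc a0 a1 a0 b0 b0 b1 ha01 hb01 a0 a1 ha01 b0 b1 hb01).mp hc)
    have hty2 : ∀ p q : S1 × S2, Comp2 p q → Comp2 (e p) (e q) := by
      rintro ⟨p1, p2⟩ ⟨q1, q2⟩ ⟨h1, h2⟩
      simp only at h1 h2; subst h1
      have hnot : ¬ Comp1 (e (p1, p2)) (e (p1, q2)) :=
        (opp harc a0 a1 p1 b0 p2 q2 ha01 h2 a0 a1 ha01 b0 b1 hb01).mp hc
      exact comp2_of_not_comp1
        ((comp_iff harc _ _).mp (Or.inr ⟨rfl, h2⟩)) hnot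
    exact mkW v e hgen harc hty1 hty2
  · -- orientation transposed: compose with the swap
    set v' : T2 × T1 → ℝ := fun z => -v z.swap with hv'
    set e' : (S1 × S2) ≃ (T2 × T1) := e.trans (Equiv.prodComm T1 T2) with he'
    have harc' : ∀ p q, Arc u1 u2 p q ↔ Arc v' (fun p => -v' p) (e' p) (e' q) := by
      intro p q
      exact (harc p q).trans (arc_swap v (e p) (e q))
    have hswap : ∀ p : S1 × S2, e' p = (e p).swap := fun p => rfl
    have hty1 : ∀ p q : S1 × S2, Comp1 p q → Comp1 (e' p) (e' q) := by
      rintro ⟨p1, p2⟩ ⟨q1, q2⟩ ⟨h1, h2⟩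
      simp only at h1 h2; subst h2
      have hnot : ¬ Comp1 (e (p1, p2)) (e (q1, p2)) :=
        fun h => hc ((opp harc a0 a1 a0 b0 b0 b1 ha01 hb01 a0 a1 ha01 b0 b1 hb01).mpr
          ((opp harc p1 q1 a0 p2 b0 b1 h1 hb01 a0 a1 ha01 b0 b1 hb01).mp h))
      have h2' : Comp2 (e (p1, p2)) (e (q1, p2)) :=
        comp2_of_not_comp1 ((comp_iff harc _ _).mp (Or.inl ⟨h1, rfl⟩)) hnot
      rw [hswap, hswap]
      exact ⟨h2'.2, h2'.1⟩
    have hty2 : ∀ p q : S1 × S2, Comp2 p q → Comp2 (e' p) (e' q) := by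
      rintro ⟨p1, p2⟩ ⟨q1, q2⟩ ⟨h1, h2⟩
      simp only at h1 h2; subst h1
      have h1' : Comp1 (e (p1, p2)) (e (p1, q2)) := by
        by_contra hnot
        exact hc ((opp harc a0 a1 p1 b0 p2 q2 ha01 h2 a0 a1 ha01 b0 b1 hb01).mpr hnot)
      rw [hswap, hswap]
      exact ⟨h1'.2, h1'.1⟩
    exact mkW v' e' hgen harc' hty1 hty2

/-- Potential transfer. -/
lemma pot_transfer {u1 u2 : S1 × S2 → ℝ} (hgen : Generic u1 u2)
    (hpot : PrefPotential u1 u2) :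
    ∃ φ' : S1 × S2 → ℝ,
      (∀ p q, Comp1 p q → (u1 p < u1 q ↔ φ' p < φ' q)) ∧
      (∀ p q, Comp2 p q → (u2 p < u2 q ↔ φ' p < φ' q)) := by
  obtain ⟨T1, T2, v1, v2, φ, ⟨hp1, hp2⟩, e, harc⟩ := hpot
  have harcφ : ∀ p q : S1 × S2, Arc u1 u2 p q → φ (e p) < φ (e q) := by
    intro p q h
    rcases (harc p q).mp h with ⟨hc1, hle⟩ | ⟨hc2, hle⟩
    · have hd := hp1 _ _ hc1
      have hne : v1 (e p) ≠ v1 (e q) := by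
        intro heq
        exact no_both hgen h ((harc q p).mpr (Or.inl ⟨comp1_symm hc1, heq.ge⟩))
      have := lt_of_le_of_ne hle hne
      linarith
    · have hd := hp2 _ _ hc2
      have hne : v2 (e p) ≠ v2 (e q) := by
        intro heq
        exact no_both hgen h ((harc q p).mpr (Or.inr ⟨comp2_symm hc2, heq.ge⟩))
      have := lt_of_le_of_ne hle hne
      linarith
  refine ⟨fun p => φ (e p), ?_, ?_⟩
  · intro p q hc
    constructor
    · intro h
      exact harcφ p q (Or.inl ⟨hc, h.le⟩)
    · intro h
      by_contra hn
      have h' : u1 q < u1 p := ((hgen.1 p q hc).lt_or_gt).resolve_left hn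
      exact absurd (harcφ q p (Or.inl ⟨comp1_symm hc, h'.le⟩)) (asymm h)
  · intro p q hc
    constructor
    · intro h
      exact harcφ p q (Or.inr ⟨hc, h.le⟩)
    · intro h
      by_contra hn
      have h' : u2 q < u2 p := ((hgen.2 p q hc).lt_or_gt).resolve_left hn
      exact absurd (harcφ q p (Or.inr ⟨comp2_symm hc, h'.le⟩)) (asymm h)

end ZSPAux

end ZSPAux2

section ZSPAux3

namespace ZSPAux

variable {S1 S2 : Type}

section Core

variable {u1 u2 w φ' : S1 × S2 → ℝ}
  (hgen : Generic u1 u2)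
  (hw1 : ∀ p q, Comp1 p q → (u1 p < u1 q ↔ w p < w q))
  (hw2 : ∀ p q, Comp2 p q → (u2 p < u2 q ↔ w q < w p))
  (hφ1 : ∀ p q, Comp1 p q → (u1 p < u1 q ↔ φ' p < φ' q))
  (hφ2 : ∀ p q, Comp2 p q → (u2 p < u2 q ↔ φ' p < φ' q))

include hw1 hφ1 in
lemma keyc {a a' : S1} (b : S2) (h : a ≠ a') :
    w (a, b) < w (a', b) ↔ φ' (a, b) < φ' (a', b) :=
  (hw1 (a, b) (a', b) ⟨h, rfl⟩).symm.trans (hφ1 (a, b) (a', b) ⟨h, rfl⟩)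

include hw2 hφ2 in
lemma keyr (a : S1) {b b' : S2} (h : b ≠ b') :
    w (a, b') < w (a, b) ↔ φ' (a, b) < φ' (a, b') :=
  (hw2 (a, b) (a, b') ⟨rfl, h⟩).symm.trans (hφ2 (a, b) (a, b') ⟨rfl, h⟩)

include hgen hw1 in
lemma wcol_ne {a a' : S1} (b : S2) (h : a ≠ a') : w (a, b) ≠ w (a', b) := by
  intro he
  rcases (hgen.1 (a, b) (a', b) ⟨h, rfl⟩).lt_or_gt with h' | h'
  · exact absurd ((hw1 (a, b) (a', b) ⟨h, rfl⟩).mp h') (by rw [he]; exact lt_irrefl _)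
  · exact absurd ((hw1 (a', b) (a, b) ⟨h.symm, rfl⟩).mp h') (by rw [he]; exact lt_irrefl _)

include hgen hw2 in
lemma wrow_ne (a : S1) {b b' : S2} (h : b ≠ b') : w (a, b) ≠ w (a, b') := by
  intro he
  rcases (hgen.2 (a, b) (a, b') ⟨rfl, h⟩).lt_or_gt with h' | h'
  · exact absurd ((hw2 (a, b) (a, b') ⟨rfl, h⟩).mp h') (by rw [he]; exact lt_irrefl _)
  · exact absurd ((hw2 (a, b') (a, b) ⟨rfl, h.symm⟩).mp h') (by rw [he]; exact lt_irrefl _)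

include hw1 hw2 hφ1 hφ2 in
/-- Core impossibility: a fully "cyclic-signed" 2×2 square contradicts the potential. -/
lemma coreA {r r' : S1} {t t' : S2} (hrr' : r ≠ r') (htt' : t ≠ t')
    (h1 : w (r', t) < w (r, t)) (h2 : w (r, t') < w (r', t'))
    (h3 : w (r, t') < w (r, t)) (h4 : w (r', t) < w (r', t')) : False := by
  have k1 : φ' (r', t) < φ' (r, t) := (keyc hw1 hφ1 t hrr'.symm).mp h1
  have k2 : φ' (r, t') < φ' (r', t') := (keyc hw1 hφ1 t' hrr').mp h2
  have k3 : φ' (r, t) < φ' (r, t') := (keyr hw2 hφ2 r htt').mp h3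
  have k4 : φ' (r', t') < φ' (r', t) := (keyr hw2 hφ2 r' htt'.symm).mp h4
  linarith

include hgen hw1 hw2 hφ1 hφ2 in
/-- No 2×2 square has both its row pair and its column pair "incomparable":
given rows incomparable, the columns compare the same way in both rows. -/
lemma starA {r r' : S1} {t t' : S2} (hrr' : r ≠ r') (htt' : t ≠ t')
    (h1 : w (r', t) < w (r, t)) (h2 : w (r, t') < w (r', t')) :
    (w (r, t') < w (r, t) ↔ w (r', t') < w (r', t)) := by
  constructor
  · intro h3
    by_contra h4
    have h4' : w (r', t) < w (r', t') :=
      ((wrow_ne hgen hw2 r' htt').lt_or_gt).resolve_right h4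
    exact coreA hw1 hw2 hφ1 hφ2 hrr' htt' h1 h2 h3 h4'
  · intro h4
    by_contra h3
    have h3' : w (r, t) < w (r, t') :=
      ((wrow_ne hgen hw2 r htt').lt_or_gt).resolve_right h3
    linarith

include hgen hw1 hw2 hφ1 hφ2 in
/-- Transposed version: given columns incomparable, rows compare the same way. -/
lemma starA' {r r' : S1} {t t' : S2} (hrr' : r ≠ r') (htt' : t ≠ t')
    (h1 : w (r, t') < w (r, t)) (h2 : w (r', t) < w (r', t')) :
    (w (r', t) < w (r, t) ↔ w (r', t') < w (r, t')) := by
  constructor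
  · intro h3
    by_contra h4
    have h4' : w (r, t') < w (r', t') :=
      ((wcol_ne hgen hw1 t' hrr').lt_or_gt).resolve_right h4
    exact coreA hw1 hw2 hφ1 hφ2 hrr' htt' h3 h4' h1 h2
  · intro h4
    by_contra h3
    have h3' : w (r, t) < w (r', t) :=
      ((wcol_ne hgen hw1 t hrr').lt_or_gt).resolve_right h3
    linarith

include hgen hw1 hw2 hφ1 hφ2 in
lemma exists_dominated (A : Finset S1) (B : Finset S2)
    (hA : A.Nonempty) (hB : B.Nonempty) (hcard : 1 < A.card ∨ 1 < B.card) :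
    (∃ s ∈ A, ∃ t ∈ A, s ≠ t ∧ ∀ r ∈ B, u1 (t, r) < u1 (s, r)) ∨
    (∃ s ∈ B, ∃ t ∈ B, s ≠ t ∧ ∀ r ∈ A, u2 (r, t) < u2 (r, s)) := by
  classical
  by_contra hcon
  push_neg at hcon
  obtain ⟨hnr, hnc⟩ := hcon
  -- reduce non-domination to w
  have hnr' : ∀ s ∈ A, ∀ t ∈ A, s ≠ t → ∃ r ∈ B, w (s, r) < w (t, r) := by
    intro s hs t ht hst
    obtain ⟨r, hr, hle⟩ := hnr s hs t ht hst
    refine ⟨r, hr, (hw1 (s, r) (t, r) ⟨hst, rfl⟩).mp ?_⟩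
    exact ((hgen.1 (t, r) (s, r) ⟨fun h => hst h.symm, rfl⟩).lt_or_gt).resolve_left
      (not_lt.mpr hle)
  have hnc' : ∀ s ∈ B, ∀ t ∈ B, s ≠ t → ∃ r ∈ A, w (r, t) < w (r, s) := by
    intro s hs t ht hst
    obtain ⟨r, hr, hle⟩ := hnc s hs t ht hst
    refine ⟨r, hr, (hw2 (r, s) (r, t) ⟨rfl, hst⟩).mp ?_⟩
    exact ((hgen.2 (r, t) (r, s) ⟨rfl, fun h => hst h.symm⟩).lt_or_gt).resolve_left
      (not_lt.mpr hle)
  -- global maximum of w on A ×ˢ B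
  obtain ⟨m, hmAB, hmax⟩ := Finset.exists_max_image (A ×ˢ B) w (hA.product hB)
  obtain ⟨ah, bh⟩ := m
  have hahA : ah ∈ A := (Finset.mem_product.mp hmAB).1
  have hbhB : bh ∈ B := (Finset.mem_product.mp hmAB).2
  have hmax' : ∀ a ∈ A, ∀ b ∈ B, w (a, b) ≤ w (ah, bh) := fun a ha b hb =>
    hmax (a, b) (Finset.mem_product.mpr ⟨ha, hb⟩)
  by_cases hA1 : A.card ≤ 1
  · -- single row
    have hB2 : 1 < B.card := hcard.resolve_left (by omega)
    obtain ⟨s, hsB, hsne⟩ := Finset.exists_mem_ne hB2 bh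
    obtain ⟨r, hrA, hlt⟩ := hnc' s hsB bh hbhB hsne
    have : r = ah := Finset.card_le_one.mp hA1 r hrA ah hahA
    subst this
    exact absurd hlt (not_lt.mpr (hmax' r hrA s hsB))
  by_cases hB1 : B.card ≤ 1
  · have hA2 : 1 < A.card := by omega
    obtain ⟨r, hrA, hrne⟩ := Finset.exists_mem_ne hA2 ah
    obtain ⟨b, hbB, hlt⟩ := hnr' ah hahA r hrA hrne.symm
    have : b = bh := Finset.card_le_one.mp hB1 b hbB bh hbhB
    subst this
    exact absurd hlt (not_lt.mpr (hmax' r hrA b hbB))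
  have hA2 : 1 < A.card := by omega
  -- minimal row (≠ ah) in column bh
  obtain ⟨r1, hr1A, hr1ne⟩ := Finset.exists_mem_ne hA2 ah
  obtain ⟨r0, hr0R, hr0min⟩ := Finset.exists_min_image (A.erase ah)
    (fun r => w (r, bh)) ⟨r1, Finset.mem_erase.mpr ⟨hr1ne, hr1A⟩⟩
  have hr0A : r0 ∈ A := Finset.mem_of_mem_erase hr0R
  have hr0ne : r0 ≠ ah := Finset.ne_of_mem_erase hr0R
  -- row r0 is not dominated by ah : a column s with w(ah,s) < w(r0,s)
  obtain ⟨s, hsB, hws⟩ := hnr' ah hahA r0 hr0A hr0ne.symm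
  have hwr0bh : w (r0, bh) < w (ah, bh) :=
    lt_of_le_of_ne (hmax' r0 hr0A bh hbhB) (wcol_ne hgen hw1 bh hr0ne)
  have hbne : s ≠ bh := by
    intro h
    subst h
    exact absurd hws (not_lt.mpr hwr0bh.le)
  have hwahs : w (ah, s) < w (ah, bh) :=
    lt_of_le_of_ne (hmax' ah hahA s hsB) (wrow_ne hgen hw2 ah hbne)
  -- use1 : w(r0,s) < w(r0,bh)
  have hwr0s : w (r0, s) < w (r0, bh) :=
    (starA hgen hw1 hw2 hφ1 hφ2 hr0ne.symm hbne.symm hwr0bh hws).mp hwahs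
  -- column bh is not dominated by s : a row r' with w(r',bh) < w(r',s)
  obtain ⟨r', hr'A, hwr'⟩ := hnc' s hsB bh hbhB hbne
  have hr'ne : r' ≠ ah := by
    intro h
    subst h
    exact absurd hwr' (not_lt.mpr hwahs.le)
  have hwr'bh : w (r', bh) < w (ah, bh) :=
    lt_of_le_of_ne (hmax' r' hr'A bh hbhB) (wcol_ne hgen hw1 bh hr'ne)
  -- use3 : w(r',s) < w(ah,s)
  have hwr's : w (r', s) < w (ah, s) :=
    (starA' hgen hw1 hw2 hφ1 hφ2 hr'ne.symm hbne.symm hwahs hwr').mp hwr'bh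
  have hwr's0 : w (r', s) < w (r0, s) := hwr's.trans hws
  have hner' : r' ≠ r0 := fun h => absurd hwr's0 (by rw [h]; exact lt_irrefl _)
  -- use4 : w(r',bh) < w(r0,bh), contradicting minimality of r0
  have hfin : w (r', bh) < w (r0, bh) :=
    (starA' hgen hw1 hw2 hφ1 hφ2 hner'.symm hbne.symm hwr0s hwr').mpr hwr's0
  exact absurd hfin
    (not_lt.mpr (hr0min r' (Finset.mem_erase.mpr ⟨hr'ne, hr'A⟩)))

end Core

end ZSPAux

end ZSPAux3

section ZSPAux4

namespace ZSPAux

variable {S1 S2 : Type} [DecidableEq S1] [DecidableEq S2]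

lemma dsolve_of_signs {u1 u2 w φ' : S1 × S2 → ℝ}
    (hgen : Generic u1 u2)
    (hw1 : ∀ p q, Comp1 p q → (u1 p < u1 q ↔ w p < w q))
    (hw2 : ∀ p q, Comp2 p q → (u2 p < u2 q ↔ w q < w p))
    (hφ1 : ∀ p q, Comp1 p q → (u1 p < u1 q ↔ φ' p < φ' q))
    (hφ2 : ∀ p q, Comp2 p q → (u2 p < u2 q ↔ φ' p < φ' q)) :
    ∀ (n : ℕ) (A : Finset S1) (B : Finset S2), A.card + B.card ≤ n →
      A.Nonempty → B.Nonempty → DSolve u1 u2 A B := by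
  intro n
  induction n with
  | zero =>
    intro A B hle hA hB
    have := hA.card_pos
    omega
  | succ n ih =>
    intro A B hle hA hB
    by_cases hsing : A.card = 1 ∧ B.card = 1
    · obtain ⟨a, ha⟩ := Finset.card_eq_one.mp hsing.1
      obtain ⟨b, hb⟩ := Finset.card_eq_one.mp hsing.2
      rw [ha, hb]
      exact DSolve.base a b
    · have hcard : 1 < A.card ∨ 1 < B.card := by
        have h1 := hA.card_pos
        have h2 := hB.card_pos
        rcases Nat.lt_or_ge 1 A.card with h | h
        · exact Or.inl h
        · refine Or.inr ?_
          have : A.card = 1 := by omega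
          rcases Nat.lt_or_ge 1 B.card with h' | h'
          · exact h'
          · exact absurd ⟨this, by omega⟩ hsing
      rcases exists_dominated hgen hw1 hw2 hφ1 hφ2 A B hA hB hcard with
        ⟨s, hs, t, ht, hne, hdom⟩ | ⟨s, hs, t, ht, hne, hdom⟩
      · refine DSolve.elim1 A B s t hs ht hne hdom (ih (A.erase t) B ?_ ?_ hB)
        · have := Finset.card_erase_of_mem ht
          have := hA.card_pos
          omega
        · exact ⟨s, Finset.mem_erase.mpr ⟨hne, hs⟩⟩
      · refine DSolve.elim2 A B s t hs ht hne hdom (ih A (B.erase t) ?_ hA ?_)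
        · have := Finset.card_erase_of_mem ht
          have := hB.card_pos
          omega
        · exact ⟨s, Finset.mem_erase.mpr ⟨hne, hs⟩⟩

end ZSPAux

end ZSPAux4

/-- a generic game that is both preference-zero-sum and
preference-potential is dominance-solvable. -/
theorem zero_sum_potential_dominance {S1 S2 : Type}
    [Fintype S1] [Fintype S2] [DecidableEq S1] [DecidableEq S2]
    [Nonempty S1] [Nonempty S2] (u1 u2 : S1 × S2 → ℝ)
    (hgen : Generic u1 u2) (hzs : PrefZeroSum u1 u2) (hpot : PrefPotential u1 u2) :
    DSolve u1 u2 Finset.univ Finset.univ := by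
  classical
  obtain ⟨φ', hφ1, hφ2⟩ := ZSPAux.pot_transfer hgen hpot
  by_cases htriv1 : ∀ a a' : S1, a = a'
  · refine ZSPAux.dsolve_of_signs (w := fun p => -u2 p) (φ' := φ') hgen ?_ ?_ hφ1 hφ2
      (Finset.univ.card + Finset.univ.card) Finset.univ Finset.univ le_rfl
      Finset.univ_nonempty Finset.univ_nonempty
    · intro p q hc
      exact absurd (htriv1 p.1 q.1) hc.1
    · intro p q _
      exact (neg_lt_neg_iff).symm
  by_cases htriv2 : ∀ b b' : S2, b = b'
  · refine ZSPAux.dsolve_of_signs (w := u1) (φ' := φ') hgen ?_ ?_ hφ1 hφ2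
      (Finset.univ.card + Finset.univ.card) Finset.univ Finset.univ le_rfl
      Finset.univ_nonempty Finset.univ_nonempty
    · intro p q _
      exact Iff.rfl
    · intro p q hc
      exact absurd (htriv2 p.2 q.2) hc.2
  push_neg at htriv1 htriv2
  obtain ⟨a0, a1, ha01⟩ := htriv1
  obtain ⟨b0, b1, hb01⟩ := htriv2
  obtain ⟨w, hw1, hw2⟩ := ZSPAux.zs_transfer hgen hzs a0 a1 ha01 b0 b1 hb01
  exact ZSPAux.dsolve_of_signs hgen hw1 hw2 hφ1 hφ2
    (Finset.univ.card + Finset.univ.card) Finset.univ Finset.univ le_rfl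
    Finset.univ_nonempty Finset.univ_nonempty
end
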